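/- Fix τ ∈ (1/2, 1) and R ≥ 1. For every c with 0 < c < (1 − τ)/2 there is δ₀ > 0 with the following property for all 0 < δ < δ₀. Let p, q ∈ B(0,1) with q ≠ 0 and dist(p, span(q)) ≥ δ^τ. Then the planes V_p and V_q are non-parallel, their intersection V_p ∩ V_q is an affine line L, and V_p(R·δ^{1−c}) ∩ V_q(R·δ^{1−c}) ∩ B(0,1) is contained in the closed δ^c-neighbourhood of L. -/

import Mathlib

open Set Metric
open scoped RealInnerProductSpace

/-- The vector `(x, y, z)` of `ℝ³` as a Euclidean space. -/
noncomputable def e3 (x y z : ℝ) : EuclideanSpace ℝ (Fin 3) :=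
  (WithLp.equiv 2 (Fin 3 → ℝ)).symm ![x, y, z]

/-- The closed `δ`-neighbourhood of a set `A ⊂ ℝ³`. -/
def nbhd (A : Set (EuclideanSpace ℝ (Fin 3))) (δ : ℝ) : Set (EuclideanSpace ℝ (Fin 3)) :=
  {x | Metric.infDist x A ≤ δ}

/-- The plane `V_p = {w : (w - p/2) · (p₁, p₂, -p₃) = 0}`. -/
noncomputable def Vplane (p : EuclideanSpace ℝ (Fin 3)) : Set (EuclideanSpace ℝ (Fin 3)) :=
  {w | ⟪w - (1/2 : ℝ) • p, e3 (p 0) (p 1) (-(p 2))⟫ = 0}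

/-- The line spanned by `v`, as a subset of `ℝ³`. -/
def lineSpan (v : EuclideanSpace ℝ (Fin 3)) : Set (EuclideanSpace ℝ (Fin 3)) :=
  ((Submodule.span ℝ {v} : Submodule ℝ (EuclideanSpace ℝ (Fin 3))) :
    Set (EuclideanSpace ℝ (Fin 3)))

/-! Reflection in the plane `x₃ = 0` preserves inner products and turns `V_p` into the plane
`{w | ⟪w, p̃⟫ = a_p}` with normal `p̃ = (p₁, p₂, -p₃)`. The Gram determinant of the two normals is
therefore `‖p‖²‖q‖² - ⟪p, q⟫² = ‖q‖² dist(p, span q)² ≥ ‖q‖² δ^{2τ} > 0`, so the normals are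
independent and the planes meet in a line. A point `x` within `r` of both planes is moved onto that
line by the vector `y ∈ span {p̃, q̃}` with `⟪y, p̃⟫ = ⟪x, p̃⟫ - a_p` and `⟪y, q̃⟫ = ⟪x, q̃⟫ - a_q`;
Cramer's rule gives `‖y‖² · Gram ≤ (2r‖p‖‖q‖)²`, hence `‖y‖ ≤ 2r / δ^τ`, which is at most `δ^c`
for `r = R δ^{1-c}` as soon as `2R δ^{1-2c-τ} ≤ 1`. -/

section InnerProductSpace

variable {E : Type*} [NormedAddCommGroup E] [InnerProductSpace ℝ E]

def hyperplane (n : E) (a : ℝ) : Set E := {x | ⟪x, n⟫ = a}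

def gramDet (n m : E) : ℝ := ‖n‖ ^ 2 * ‖m‖ ^ 2 - ⟪n, m⟫ ^ 2

/-- The solution in `span {n, m}` of `⟪y, n⟫ = s`, `⟪y, m⟫ = t`, by Cramer's rule. -/
noncomputable def solveInnerPair (n m : E) (s t : ℝ) : E :=
  (gramDet n m)⁻¹ • ((‖m‖ ^ 2 * s - ⟪n, m⟫ * t) • n + (‖n‖ ^ 2 * t - ⟪n, m⟫ * s) • m)

variable {n m : E}

theorem inner_solveInnerPair_left (hG : gramDet n m ≠ 0) (s t : ℝ) :
    ⟪solveInnerPair n m s t, n⟫ = s := by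
  unfold gramDet at hG
  simp only [solveInnerPair, gramDet, inner_smul_left, inner_add_left, real_inner_self_eq_norm_sq,
    real_inner_comm n m, RCLike.conj_to_real]
  field_simp
  ring

theorem inner_solveInnerPair_right (hG : gramDet n m ≠ 0) (s t : ℝ) :
    ⟪solveInnerPair n m s t, m⟫ = t := by
  unfold gramDet at hG
  simp only [solveInnerPair, gramDet, inner_smul_left, inner_add_left, real_inner_self_eq_norm_sq,
    RCLike.conj_to_real]
  field_simp
  ring

theorem norm_sq_solveInnerPair_mul_gramDet (hG : gramDet n m ≠ 0) (s t : ℝ) :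
    ‖solveInnerPair n m s t‖ ^ 2 * gramDet n m =
      ‖m‖ ^ 2 * s ^ 2 - 2 * ⟪n, m⟫ * s * t + ‖n‖ ^ 2 * t ^ 2 := by
  unfold gramDet at hG
  rw [← real_inner_self_eq_norm_sq]
  simp only [solveInnerPair, gramDet, inner_smul_left, inner_smul_right, inner_add_left,
    inner_add_right, real_inner_self_eq_norm_sq, real_inner_comm n m, RCLike.conj_to_real]
  field_simp
  ring

theorem abs_inner_sub_le_infDist_hyperplane_mul_norm {a : ℝ} (hne : (hyperplane n a).Nonempty)
    (x : E) : |⟪x, n⟫ - a| ≤ infDist x (hyperplane n a) * ‖n‖ := by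
  rcases eq_or_ne n 0 with rfl | hn0
  · obtain ⟨y, rfl⟩ := hne
    simp
  have hn := norm_pos_iff.2 hn0
  rw [← div_le_iff₀ hn, le_infDist hne]
  intro y hy
  rw [div_le_iff₀ hn, dist_eq_norm, ← hy, ← inner_sub_left]
  exact abs_real_inner_le_norm _ _

theorem norm_sq_solveInnerPair_mul_gramDet_le (hG : gramDet n m ≠ 0) {r s t : ℝ}
    (hs : |s| ≤ r * ‖n‖) (ht : |t| ≤ r * ‖m‖) :
    ‖solveInnerPair n m s t‖ ^ 2 * gramDet n m ≤ (2 * r * ‖n‖ * ‖m‖) ^ 2 := by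
  rw [norm_sq_solveInnerPair_mul_gramDet hG]
  have hs2 : s ^ 2 ≤ (r * ‖n‖) ^ 2 := sq_le_sq' (abs_le.1 hs).1 (abs_le.1 hs).2
  have ht2 : t ^ 2 ≤ (r * ‖m‖) ^ 2 := sq_le_sq' (abs_le.1 ht).1 (abs_le.1 ht).2
  have hcross : |⟪n, m⟫ * s * t| ≤ (‖n‖ * ‖m‖) * (r * ‖n‖) * (r * ‖m‖) := by
    rw [abs_mul, abs_mul]
    have hrn : 0 ≤ r * ‖n‖ := (abs_nonneg s).trans hs
    exact mul_le_mul (mul_le_mul (abs_real_inner_le_norm n m) hs (abs_nonneg s) (by positivity)) ht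
      (abs_nonneg t) (by positivity)
  nlinarith [neg_abs_le (⟪n, m⟫ * s * t), sq_nonneg ‖n‖, sq_nonneg ‖m‖]

theorem sq_infDist_inter_mul_gramDet_le (hG : 0 < gramDet n m) {a b r : ℝ} {x : E}
    (hxn : infDist x (hyperplane n a) ≤ r) (hxm : infDist x (hyperplane m b) ≤ r) :
    infDist x (hyperplane n a ∩ hyperplane m b) ^ 2 * gramDet n m ≤ (2 * r * ‖n‖ * ‖m‖) ^ 2 := by
  set y := solveInnerPair n m (⟪x, n⟫ - a) (⟪x, m⟫ - b)
  have hxy : x - y ∈ hyperplane n a ∩ hyperplane m b := by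
    constructor <;>
      simp only [hyperplane, Set.mem_ofPred_eq, inner_sub_left, y, inner_solveInnerPair_left hG.ne',
        inner_solveInnerPair_right hG.ne', sub_sub_cancel]
  have hdist : infDist x (hyperplane n a ∩ hyperplane m b) ≤ ‖y‖ := by
    have := infDist_le_dist_of_mem (x := x) hxy
    rwa [dist_eq_norm, sub_sub_cancel] at this
  have hs := (abs_inner_sub_le_infDist_hyperplane_mul_norm ⟨_, hxy.1⟩ x).trans
    (mul_le_mul_of_nonneg_right hxn (norm_nonneg n))
  have ht := (abs_inner_sub_le_infDist_hyperplane_mul_norm ⟨_, hxy.2⟩ x).trans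
    (mul_le_mul_of_nonneg_right hxm (norm_nonneg m))
  calc infDist x (hyperplane n a ∩ hyperplane m b) ^ 2 * gramDet n m
      ≤ ‖y‖ ^ 2 * gramDet n m := by gcongr; exact infDist_nonneg
    _ ≤ (2 * r * ‖n‖ * ‖m‖) ^ 2 := norm_sq_solveInnerPair_mul_gramDet_le hG.ne' hs ht

theorem exists_hyperplane_inter_eq_line [FiniteDimensional ℝ E] (hE : Module.finrank ℝ E = 3)
    (hG : gramDet n m ≠ 0) (a b : ℝ) :
    ∃ w v : E, v ≠ 0 ∧ hyperplane n a ∩ hyperplane m b = {x | ∃ t : ℝ, x = w + t • v} := by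
  set f : E →ₗ[ℝ] ℝ × ℝ := (innerₛₗ ℝ n).prod (innerₛₗ ℝ m)
  have hf : ∀ x, f x = (⟪x, n⟫, ⟪x, m⟫) := fun x => by
    simp [f, real_inner_comm]
  have hrange : f.range = ⊤ := LinearMap.range_eq_top.2 fun st =>
    ⟨solveInnerPair n m st.1 st.2, by
      rw [hf, inner_solveInnerPair_left hG, inner_solveInnerPair_right hG]⟩
  have hker : Module.finrank ℝ f.ker = 1 := by
    have := f.finrank_range_add_finrank_ker
    rw [hrange, finrank_top, Module.finrank_prod, Module.finrank_self, hE] at this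
    omega
  obtain ⟨v, hv, hspan⟩ := finrank_eq_one_iff'.1 hker
  set w := solveInnerPair n m a b
  refine ⟨w, v, by exact_mod_cast hv, Set.ext fun x => ?_⟩
  have hmem : x ∈ hyperplane n a ∩ hyperplane m b ↔ x - w ∈ f.ker := by
    simp [hf, hyperplane, inner_sub_left, w, inner_solveInnerPair_left hG,
      inner_solveInnerPair_right hG, sub_eq_zero]
  rw [hmem, Set.mem_ofPred_eq]
  constructor
  · intro hx
    obtain ⟨t, ht⟩ := hspan ⟨x - w, hx⟩
    exact ⟨t, by rw [← sub_eq_iff_eq_add']; exact (congrArg Subtype.val ht).symm⟩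
  · rintro ⟨t, rfl⟩
    simp only [add_sub_cancel_left]
    exact f.ker.smul_mem t v.2

theorem gramDet_eq_norm_sq_sub_proj_mul (p : E) {q : E} (hq : q ≠ 0) :
    gramDet p q = ‖p - (⟪p, q⟫ / ‖q‖ ^ 2) • q‖ ^ 2 * ‖q‖ ^ 2 := by
  have hq2 : ‖q‖ ^ 2 ≠ 0 := by positivity
  rw [gramDet, ← real_inner_self_eq_norm_sq (p - _), inner_sub_sub_self]
  simp only [real_inner_smul_left, real_inner_smul_right, real_inner_comm p q]
  simp only [real_inner_self_eq_norm_sq]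
  field_simp
  ring

theorem sq_infDist_span_mul_le_gramDet (p : E) {q : E} (hq : q ≠ 0) :
    infDist p (Submodule.span ℝ {q}) ^ 2 * ‖q‖ ^ 2 ≤ gramDet p q := by
  rw [gramDet_eq_norm_sq_sub_proj_mul p hq, ← dist_eq_norm]
  gcongr
  · exact infDist_nonneg
  · exact infDist_le_dist_of_mem (Submodule.smul_mem _ _ (Submodule.mem_span_singleton_self q))

end InnerProductSpace

theorem exists_forall_mul_rpow_le {τ c : ℝ} (hcτ : c < (1 - τ) / 2) (K : ℝ) :
    ∃ δ₀ > 0, ∀ δ : ℝ, 0 < δ → δ < δ₀ → K * δ ^ (1 - c) ≤ δ ^ τ * δ ^ c := by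
  set e := 1 - 2 * c - τ
  have he : 0 < e := by linarith
  have hlim : Filter.Tendsto (fun δ : ℝ => K * δ ^ e) (nhds 0) (nhds 0) := by
    simpa [Real.zero_rpow he.ne'] using
      (Real.continuousAt_rpow_const 0 e (Or.inr he.le)).tendsto.const_mul K
  obtain ⟨δ₀, hδ₀, hsmall⟩ := Metric.eventually_nhds_iff.1 (hlim.eventually (ge_mem_nhds one_pos))
  refine ⟨δ₀, hδ₀, fun δ hδ hδδ₀ => ?_⟩
  have hsplit : δ ^ (1 - c) = δ ^ e * (δ ^ τ * δ ^ c) := by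
    rw [← Real.rpow_add hδ, ← Real.rpow_add hδ]
    congr 1
    simp only [e]
    ring
  calc K * δ ^ (1 - c) = K * δ ^ e * (δ ^ τ * δ ^ c) := by rw [hsplit, mul_assoc]
    _ ≤ 1 * (δ ^ τ * δ ^ c) := by
      gcongr
      exact hsmall (by rwa [Real.dist_0_eq_abs, abs_of_pos hδ])
    _ = δ ^ τ * δ ^ c := one_mul _

theorem le_of_sq_mul_le_sq_mul {d ε σ G : ℝ} (hd : 0 ≤ d) (hε : 0 ≤ ε) (hσ : 0 < σ)
    (hG : σ ^ 2 ≤ G) (h : d ^ 2 * G ≤ (ε * σ) ^ 2) : d ≤ ε := by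
  have hsq : (d * σ) ^ 2 ≤ (ε * σ) ^ 2 := by
    rw [mul_pow]
    exact (mul_le_mul_of_nonneg_left hG (sq_nonneg d)).trans h
  exact le_of_mul_le_mul_right
    ((pow_le_pow_iff_left₀ (by positivity) (by positivity) two_ne_zero).1 hsq) hσ

noncomputable def reflectXY (p : EuclideanSpace ℝ (Fin 3)) : EuclideanSpace ℝ (Fin 3) :=
  e3 (p 0) (p 1) (-(p 2))

theorem inner_reflectXY (p q : EuclideanSpace ℝ (Fin 3)) :
    ⟪reflectXY p, reflectXY q⟫ = ⟪p, q⟫ := by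
  simp only [reflectXY, e3, PiLp.inner_apply, Fin.sum_univ_three, RCLike.inner_apply, conj_trivial]
  simp

theorem norm_reflectXY (p : EuclideanSpace ℝ (Fin 3)) : ‖reflectXY p‖ = ‖p‖ := by
  rw [norm_eq_sqrt_real_inner, norm_eq_sqrt_real_inner, inner_reflectXY]

theorem gramDet_reflectXY (p q : EuclideanSpace ℝ (Fin 3)) :
    gramDet (reflectXY p) (reflectXY q) = gramDet p q := by
  simp only [gramDet, norm_reflectXY, inner_reflectXY]

theorem Vplane_eq_hyperplane (p : EuclideanSpace ℝ (Fin 3)) :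
    Vplane p = hyperplane (reflectXY p) ⟪(1 / 2 : ℝ) • p, reflectXY p⟫ := by
  ext w
  simp only [Vplane, hyperplane, reflectXY, Set.mem_ofPred_eq, inner_sub_left, sub_eq_zero]

theorem plane_neighbourhoods_near_line_general (τ R : ℝ) :
    ∀ c : ℝ, 0 < c → c < (1 - τ) / 2 →
      ∃ δ₀ : ℝ, 0 < δ₀ ∧ ∀ δ : ℝ, 0 < δ → δ < δ₀ →
      ∀ p q : EuclideanSpace ℝ (Fin 3),
        p ∈ Metric.closedBall (0 : EuclideanSpace ℝ (Fin 3)) 1 →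
        q ∈ Metric.closedBall (0 : EuclideanSpace ℝ (Fin 3)) 1 →
        q ≠ 0 → δ ^ τ ≤ Metric.infDist p (lineSpan q) →
        ∃ w v : EuclideanSpace ℝ (Fin 3), v ≠ 0 ∧
          Vplane p ∩ Vplane q = {x | ∃ t : ℝ, x = w + t • v} ∧
          nbhd (Vplane p) (R * δ ^ (1 - c)) ∩ nbhd (Vplane q) (R * δ ^ (1 - c)) ∩
              Metric.closedBall 0 1 ⊆
            nbhd (Vplane p ∩ Vplane q) (δ ^ c) := by
  intro c _ hcτ
  obtain ⟨δ₀, hδ₀, hsmall⟩ := exists_forall_mul_rpow_le hcτ (2 * R)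
  refine ⟨δ₀, hδ₀, fun δ hδ hδδ₀ p q hp _ hq hdist => ?_⟩
  have hσ : 0 < δ ^ τ * ‖q‖ := mul_pos (Real.rpow_pos_of_pos hδ τ) (norm_pos_iff.2 hq)
  have hgram : (δ ^ τ * ‖q‖) ^ 2 ≤ gramDet (reflectXY p) (reflectXY q) := by
    rw [gramDet_reflectXY, mul_pow]
    refine le_trans ?_ (sq_infDist_span_mul_le_gramDet p hq)
    gcongr
    exact hdist
  have hgram_pos : 0 < gramDet (reflectXY p) (reflectXY q) := (pow_pos hσ 2).trans_le hgram
  rw [Vplane_eq_hyperplane, Vplane_eq_hyperplane]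
  obtain ⟨w, v, hv, hline⟩ :=
    exists_hyperplane_inter_eq_line finrank_euclideanSpace_fin hgram_pos.ne' _ _
  refine ⟨w, v, hv, hline, fun x ⟨⟨hxp, hxq⟩, _⟩ => ?_⟩
  have hr : 0 ≤ 2 * R * δ ^ (1 - c) := by linarith [infDist_nonneg.trans hxp]
  have hbound : 2 * R * δ ^ (1 - c) * ‖p‖ ≤ δ ^ τ * δ ^ c :=
    (mul_le_of_le_one_right hr (mem_closedBall_zero_iff.1 hp)).trans (hsmall δ hδ hδδ₀)
  refine le_of_sq_mul_le_sq_mul infDist_nonneg (by positivity) hσ hgram ?_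
  calc _ ≤ (2 * (R * δ ^ (1 - c)) * ‖reflectXY p‖ * ‖reflectXY q‖) ^ 2 :=
        sq_infDist_inter_mul_gramDet_le hgram_pos hxp hxq
    _ ≤ (δ ^ c * (δ ^ τ * ‖q‖)) ^ 2 := by
        rw [norm_reflectXY, norm_reflectXY, ← mul_assoc 2]
        refine pow_le_pow_left₀ (mul_nonneg (mul_nonneg hr (norm_nonneg p)) (norm_nonneg q)) ?_ 2
        nlinarith [norm_nonneg q]

/-- Proposition B.6: if `dist(p, span q) ≥ δ^τ`, then `V_p` and `V_q` intersect in an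
affine line `L`, and `V_p(R·δ^{1-c}) ∩ V_q(R·δ^{1-c}) ∩ B(0,1)` is contained in the
`δ^c`-neighbourhood of `L` (here `0 < c < (1 - τ)/2`). -/
theorem plane_neighbourhoods_near_line (τ R : ℝ) (hτ : τ ∈ Set.Ioo (1/2 : ℝ) 1)
    (hR : 1 ≤ R) :
    ∀ c : ℝ, 0 < c → c < (1 - τ) / 2 →
      ∃ δ₀ : ℝ, 0 < δ₀ ∧ ∀ δ : ℝ, 0 < δ → δ < δ₀ →
      ∀ p q : EuclideanSpace ℝ (Fin 3),
        p ∈ Metric.closedBall (0 : EuclideanSpace ℝ (Fin 3)) 1 →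
        q ∈ Metric.closedBall (0 : EuclideanSpace ℝ (Fin 3)) 1 →
        q ≠ 0 → δ ^ τ ≤ Metric.infDist p (lineSpan q) →
        ∃ w v : EuclideanSpace ℝ (Fin 3), v ≠ 0 ∧
          Vplane p ∩ Vplane q = {x | ∃ t : ℝ, x = w + t • v} ∧
          nbhd (Vplane p) (R * δ ^ (1 - c)) ∩ nbhd (Vplane q) (R * δ ^ (1 - c)) ∩
              Metric.closedBall 0 1 ⊆
            nbhd (Vplane p ∩ Vplane q) (δ ^ c) :=
  plane_neighbourhoods_near_line_general τ R
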